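/- Let R be a left-linear TRS and μ a canonical replacement map for R (μ^can_R ⊑ μ). Then every μ-normal form is a head-normal form, i.e., if t contains no μ-replacing redex, then t does not rewrite (by →_R, in any number of steps) to a redex. -/
import Mathlib


namespace CSR

/-- First-order terms over a signature `F` with arity `ar` and variables `X`. -/
inductive Term (F : Type) (ar : F → ℕ) (X : Type) : Type where
  | var : X → Term F ar X
  | app : (f : F) → (Fin (ar f) → Term F ar X) → Term F ar X

variable {F X : Type} {ar : F → ℕ}

/-- A replacement map assigns to each symbol a subset of its argument positions. -/
abbrev RepMap (F : Type) (ar : F → ℕ) := (f : F) → Set (Fin (ar f))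

def Term.IsVar : Term F ar X → Prop
  | .var _ => True
  | .app _ _ => False

def Term.root : Term F ar X → Option F
  | .var _ => none
  | .app f _ => some f

/-- All positions of a term. -/
def Pos : Term F ar X → Set (List ℕ)
  | .var _ => {[]}
  | .app f ts => {[]} ∪ ⋃ i : Fin (ar f), (List.cons (i : ℕ)) '' Pos (ts i)

/-- Nonvariable positions of a term. -/
def PosF : Term F ar X → Set (List ℕ)
  | .var _ => ∅
  | .app f ts => {[]} ∪ ⋃ i : Fin (ar f), (List.cons (i : ℕ)) '' PosF (ts i)

/-- μ-replacing positions of a term. -/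
def PosMu (μ : RepMap F ar) : Term F ar X → Set (List ℕ)
  | .var _ => {[]}
  | .app f ts => {[]} ∪ ⋃ i ∈ μ f, (List.cons (i : ℕ)) '' PosMu μ (ts i)

/-- Subterm at a position. -/
def subtermAt : Term F ar X → List ℕ → Option (Term F ar X)
  | t, [] => some t
  | .var _, _ :: _ => none
  | .app f ts, i :: p => if h : i < ar f then subtermAt (ts ⟨i, h⟩) p else none

/-- Replace the subterm at a position. -/
def replaceAt : Term F ar X → List ℕ → Term F ar X → Option (Term F ar X)
  | _, [], u => some u
  | .var _, _ :: _, _ => none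
  | .app f ts, i :: p, u =>
      if h : i < ar f then
        (replaceAt (ts ⟨i, h⟩) p u).map fun v => Term.app f (Function.update ts ⟨i, h⟩ v)
      else none

/-- Application of a substitution. -/
def subst (σ : X → Term F ar X) : Term F ar X → Term F ar X
  | .var x => σ x
  | .app f ts => .app f fun i => subst σ (ts i)

structure Rule (F : Type) (ar : F → ℕ) (X : Type) : Type where
  lhs : Term F ar X
  rhs : Term F ar X
  lhs_not_var : ¬ lhs.IsVar

abbrev TRS (F : Type) (ar : F → ℕ) (X : Type) := Set (Rule F ar X)

/-- A redex is an instance of a left-hand side. -/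
def IsRedex (R : TRS F ar X) (t : Term F ar X) : Prop :=
  ∃ r ∈ R, ∃ σ, t = subst σ r.lhs

/-- Rewriting at a given position. -/
def RewAt (R : TRS F ar X) (p : List ℕ) (s t : Term F ar X) : Prop :=
  ∃ r ∈ R, ∃ σ, subtermAt s p = some (subst σ r.lhs) ∧ replaceAt s p (subst σ r.rhs) = some t

def Rew (R : TRS F ar X) (s t : Term F ar X) : Prop := ∃ p, RewAt R p s t

/-- Context-sensitive rewriting: rewriting at μ-replacing positions. -/
def CSRew (R : TRS F ar X) (μ : RepMap F ar) (s t : Term F ar X) : Prop :=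
  ∃ p ∈ PosMu μ s, RewAt R p s t

def RewStar (R : TRS F ar X) : Term F ar X → Term F ar X → Prop :=
  Relation.ReflTransGen (Rew R)

def CSRewStar (R : TRS F ar X) (μ : RepMap F ar) : Term F ar X → Term F ar X → Prop :=
  Relation.ReflTransGen (CSRew R μ)

/-- μ-termination: no infinite ↪_μ sequences. -/
def MuTerminating (R : TRS F ar X) (μ : RepMap F ar) : Prop :=
  WellFounded (fun a b => CSRew R μ b a)

/-- Defined symbols: roots of left-hand sides. -/
def Defined (R : TRS F ar X) : Set F := {f | ∃ r ∈ R, r.lhs.root = some f}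

def varOccs : Term F ar X → Multiset X
  | .var x => {x}
  | .app f ts => ∑ i : Fin (ar f), varOccs (ts i)

def LeftLinear [DecidableEq X] (R : TRS F ar X) : Prop :=
  ∀ r ∈ R, ∀ x : X, (varOccs r.lhs).count x ≤ 1

def IsGround : Term F ar X → Prop
  | .var _ => False
  | .app _ ts => ∀ i, IsGround (ts i)

def symbols : Term F ar X → Set F
  | .var _ => ∅
  | .app f ts => {f} ∪ ⋃ i, symbols (ts i)

/-- A constructor term (w.r.t. `R`): contains no defined symbol. -/
def ConsTerm (R : TRS F ar X) (t : Term F ar X) : Prop := ∀ f ∈ symbols t, f ∉ Defined R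

def NormalForm (R : TRS F ar X) (t : Term F ar X) : Prop := ¬ ∃ u, Rew R t u

def MuNormalForm (R : TRS F ar X) (μ : RepMap F ar) (t : Term F ar X) : Prop :=
  ¬ ∃ u, CSRew R μ t u

/-- Head-normal form (root-stable term). -/
def HeadNormalForm (R : TRS F ar X) (t : Term F ar X) : Prop :=
  ∀ u, RewStar R t u → ¬ IsRedex R u

def muEps (f : F) (ts : Fin (ar f) → Term F ar X) : RepMap F ar :=
  fun g => {i | ∃ h : g = f, ¬ (ts (Fin.cast (congrArg ar h) i)).IsVar}

/-- The minimum replacement map compatible with a term. -/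
def muTerm : Term F ar X → RepMap F ar
  | .var _ => ⊥
  | .app f ts => muEps f ts ⊔ ⨆ i : Fin (ar f), muTerm (ts i)

/-- The canonical replacement map of a TRS. -/
def muCan (R : TRS F ar X) : RepMap F ar := ⨆ r ∈ R, muTerm r.lhs

/-- μ is a canonical replacement map for R. -/
def Canonical (R : TRS F ar X) (μ : RepMap F ar) : Prop := muCan R ≤ μ

/-- R is exhaustive: defined symbols applied to closed constructor terms yield redexes. -/
def Exhaustive (R : TRS F ar X) : Prop :=
  ∀ f ∈ Defined R, ∀ ts : Fin (ar f) → Term F ar X,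
    (∀ i, IsGround (ts i) ∧ ConsTerm R (ts i)) → IsRedex R (Term.app f ts)

/-- Possibly infinite (ground) terms, represented by their labelling function. -/
structure ITerm (F : Type) (ar : F → ℕ) : Type where
  label : List ℕ → Option F
  root_isSome : (label []).isSome
  coherent : ∀ p i, (label (p ++ [i])).isSome ↔ ∃ f, label p = some f ∧ i < ar f

/-- The symbol of a finite term at a position (if any). -/
def labelAt (t : Term F ar X) (p : List ℕ) : Option F := (subtermAt t p).bind Term.root

/-- `s` rewrites (in the limit) to the possibly infinite term `δ`:
arbitrarily deep prefixes of `δ` are reachable by finite rewriting from `s`. -/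
def RewsToInf (R : TRS F ar X) (s : Term F ar X) (δ : ITerm F ar) : Prop :=
  ∀ n : ℕ, ∃ u, RewStar R s u ∧ ∀ p : List ℕ, p.length < n → labelAt u p = δ.label p

/-- A possibly infinite term built only from constructors of `R`. -/
def ITerm.Cons (R : TRS F ar X) (δ : ITerm F ar) : Prop :=
  ∀ p f, δ.label p = some f → f ∉ Defined R

/-- Every finite ground term rewrites to a possibly infinite constructor normal form. -/
def ConstructorNormalizing (R : TRS F ar X) : Prop :=
  ∀ s : Term F ar X, IsGround s → ∃ δ : ITerm F ar, δ.Cons R ∧ RewsToInf R s δ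

/-- An infinite path through data constructors. -/
def InfiniteDataPath (CΔ : Set F) (δ : ITerm F ar) : Prop :=
  ∃ g : ℕ → List ℕ, (∀ n, ∃ c ∈ CΔ, δ.label (g n) = some c) ∧
    ∀ n, ∃ j : ℕ, g (n + 1) = g n ++ [j]

def DataFinite (R : TRS F ar X) (CΔ : Set F) : Prop :=
  ∀ s : Term F ar X, IsGround s → ∀ δ : ITerm F ar, δ.Cons R → RewsToInf R s δ →
    ¬ InfiniteDataPath CΔ δ

/-- The replacement map activating the data arguments of data constructors. -/
def muDelta (CΔ : Set F) (arΔ : F → ℕ) : RepMap F ar :=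
  fun f => {i | f ∈ CΔ ∧ (i : ℕ) < arΔ f}

/-- Non-overlapping: no left-hand side unifies with a nonvariable subterm of a left-hand
side except trivially. -/
def NonOverlapping (R : TRS F ar X) : Prop :=
  ∀ r1 ∈ R, ∀ r2 ∈ R, ∀ p ∈ PosF r2.lhs, ∀ u, subtermAt r2.lhs p = some u →
    ∀ σ τ : X → Term F ar X, subst σ u = subst τ r1.lhs → p = [] ∧ r1 = r2

def Orthogonal [DecidableEq X] (R : TRS F ar X) : Prop :=
  LeftLinear R ∧ NonOverlapping R

/-- Strong compatibility: the canonical replacing positions of each left-hand side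
are exactly its nonvariable positions. -/
def StronglyCompatibleTRS (R : TRS F ar X) : Prop :=
  ∀ r ∈ R, PosF r.lhs = PosMu (muCan R) r.lhs

def ConstructorTRS (R : TRS F ar X) : Prop :=
  ∀ r ∈ R, ∃ f ts, r.lhs = Term.app f ts ∧ ∀ i, ConsTerm R (ts i)

/-- A flat constructor term `c(x₁,…,xₘ)`. -/
def FlatConsTerm (R : TRS F ar X) : Term F ar X → Prop
  | .var _ => False
  | .app c ts => c ∉ Defined R ∧ ∀ i, (ts i).IsVar

def Shallow (R : TRS F ar X) : Prop :=
  ∃ I : F → Set ℕ, ∀ r ∈ R, ∃ f ts, r.lhs = Term.app f ts ∧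
    ∀ i : Fin (ar f), ((i : ℕ) ∈ I f → FlatConsTerm R (ts i)) ∧ ((i : ℕ) ∉ I f → (ts i).IsVar)

/-- A proper specification: arguments of left-hand sides are variables or flat
constructor terms. -/
def ProperSpec (R : TRS F ar X) : Prop :=
  ∀ r ∈ R, ∃ f ts, r.lhs = Term.app f ts ∧ ∀ i, (ts i).IsVar ∨ FlatConsTerm R (ts i)

end CSR
namespace CSR
section Aux
variable {F X : Type} {ar : F → ℕ}

lemma subtermAt_nil (t : Term F ar X) : subtermAt t [] = some t := by cases t <;> rfl

lemma subst_app (σ : X → Term F ar X) (f : F) (ts : Fin (ar f) → Term F ar X) :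
    subst σ (Term.app f ts) = Term.app f (fun i => subst σ (ts i)) := rfl

lemma mem_posMu_nil (μ : RepMap F ar) (t : Term F ar X) : [] ∈ PosMu μ t := by
  cases t <;> simp [PosMu]

lemma mem_posMu_cons {μ : RepMap F ar} {f : F} {ts : Fin (ar f) → Term F ar X}
    {i : ℕ} {r : List ℕ} :
    (i :: r) ∈ PosMu μ (Term.app f ts) ↔
      ∃ h : i < ar f, ⟨i, h⟩ ∈ μ f ∧ r ∈ PosMu μ (ts ⟨i, h⟩) := by
  constructor
  · intro hm
    rcases hm with h | h
    · simp at h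
    · simp only [Set.mem_iUnion, Set.mem_image] at h
      obtain ⟨j, hj, r', hr', heq⟩ := h
      obtain ⟨hji, hrr⟩ := List.cons.inj heq
      refine ⟨hji ▸ j.isLt, ?_, ?_⟩
      · convert hj <;> simp [Fin.ext_iff, ← hji]
      · subst hrr
        convert hr' using 2
        simp [Fin.ext_iff, ← hji]
  · rintro ⟨h, hmu, hr⟩
    right
    simp only [Set.mem_iUnion, Set.mem_image]
    exact ⟨⟨i, h⟩, hmu, r, hr, rfl⟩

lemma mem_posF_nil (f : F) (ts : Fin (ar f) → Term F ar X) :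
    [] ∈ PosF (Term.app f ts) := by simp [PosF]

lemma mem_posF_cons {f : F} {ts : Fin (ar f) → Term F ar X} {i : ℕ} {r : List ℕ} :
    (i :: r) ∈ PosF (Term.app f ts) ↔
      ∃ h : i < ar f, r ∈ PosF (ts ⟨i, h⟩) := by
  constructor
  · intro hm
    rcases hm with h | h
    · simp at h
    · simp only [Set.mem_iUnion, Set.mem_image] at h
      obtain ⟨j, r', hr', heq⟩ := h
      obtain ⟨hji, hrr⟩ := List.cons.inj heq
      refine ⟨hji ▸ j.isLt, ?_⟩
      subst hrr
      convert hr' using 2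
      simp [Fin.ext_iff, ← hji]
  · rintro ⟨h, hr⟩
    right
    simp only [Set.mem_iUnion, Set.mem_image]
    exact ⟨⟨i, h⟩, r, hr, rfl⟩

end Aux
section Aux2
variable {F X : Type} {ar : F → ℕ}

lemma subtermAt_cons (f : F) (ts : Fin (ar f) → Term F ar X) (i : ℕ) (p : List ℕ) :
    subtermAt (Term.app f ts) (i :: p) =
      if h : i < ar f then subtermAt (ts ⟨i, h⟩) p else none := rfl

lemma replaceAt_nil (t u : Term F ar X) : replaceAt t [] u = some u := by cases t <;> rfl

lemma replaceAt_cons (f : F) (ts : Fin (ar f) → Term F ar X) (i : ℕ) (p : List ℕ)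
    (u : Term F ar X) :
    replaceAt (Term.app f ts) (i :: p) u =
      if h : i < ar f then
        (replaceAt (ts ⟨i, h⟩) p u).map fun v => Term.app f (Function.update ts ⟨i, h⟩ v)
      else none := rfl

lemma replaceAt_isSome {t w : Term F ar X} {p : List ℕ}
    (h : subtermAt t p = some w) (u : Term F ar X) : ∃ s, replaceAt t p u = some s := by
  induction p generalizing t with
  | nil => exact ⟨u, replaceAt_nil t u⟩
  | cons i p ih =>
    cases t with
    | var x => simp [subtermAt] at h
    | app f ts =>
      rw [subtermAt_cons] at h
      split at h
      case isTrue hlt =>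
        obtain ⟨s', hs'⟩ := ih h
        exact ⟨_, by rw [replaceAt_cons, dif_pos hlt, hs']; rfl⟩
      case isFalse => simp at h

lemma subtermAt_replaceAt_self {t s u : Term F ar X} {p : List ℕ}
    (h : replaceAt t p u = some s) : subtermAt s p = some u := by
  induction p generalizing t s with
  | nil =>
    rw [replaceAt_nil] at h
    cases h
    exact subtermAt_nil u
  | cons i p ih =>
    cases t with
    | var x => simp [replaceAt] at h
    | app f ts =>
      rw [replaceAt_cons] at h
      split at h
      case isTrue hlt =>
        rcases Option.map_eq_some_iff.mp h with ⟨v, hv, rfl⟩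
        rw [subtermAt_cons, dif_pos hlt, Function.update_self]
        exact ih hv
      case isFalse => simp at h

lemma replaceAt_back {t s u w : Term F ar X} {p : List ℕ}
    (h : replaceAt t p u = some s) (hw : subtermAt t p = some w) :
    replaceAt s p w = some t := by
  induction p generalizing t s with
  | nil =>
    rw [subtermAt_nil] at hw
    cases hw
    rw [replaceAt_nil] at h
    cases h
    exact replaceAt_nil _ _
  | cons i p ih =>
    cases t with
    | var x => simp [replaceAt] at h
    | app f ts =>
      rw [replaceAt_cons] at h
      split at h
      case isTrue hlt =>
        rcases Option.map_eq_some_iff.mp h with ⟨v, hv, rfl⟩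
        rw [subtermAt_cons, dif_pos hlt] at hw
        rw [replaceAt_cons, dif_pos hlt, Function.update_self, ih hv hw]
        simp only [Option.map_some]
        congr 1
        congr 1
        funext j
        by_cases hj : j = ⟨i, hlt⟩
        · subst hj; simp
        · simp [Function.update_of_ne hj]
      case isFalse => simp at h

lemma subtermAt_replaceAt_off {t s u : Term F ar X} {p q : List ℕ}
    (h : replaceAt t p u = some s) (h1 : ¬ p <+: q) (h2 : ¬ q <+: p) :
    subtermAt s q = subtermAt t q := by
  induction p generalizing t s q with
  | nil => exact absurd List.nil_prefix h1
  | cons i p ih =>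
    cases t with
    | var x => simp [replaceAt] at h
    | app f ts =>
      rw [replaceAt_cons] at h
      split at h
      case isFalse => simp at h
      case isTrue hlt =>
        rcases Option.map_eq_some_iff.mp h with ⟨v, hv, rfl⟩
        cases q with
        | nil => exact absurd List.nil_prefix h2
        | cons j q' =>
          rw [subtermAt_cons, subtermAt_cons]
          by_cases hij : j = i
          · subst hij
            rw [List.cons_prefix_cons] at h1 h2
            simp only [true_and] at h1 h2
            rw [dif_pos hlt, dif_pos hlt, Function.update_self]
            exact ih hv h1 h2
          · by_cases hjlt : j < ar f
            · rw [dif_pos hjlt, dif_pos hjlt,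
                Function.update_of_ne (by simp [Fin.ext_iff, hij])]
            · rw [dif_neg hjlt, dif_neg hjlt]

lemma posMu_replaceAt {μ : RepMap F ar} {t s u : Term F ar X} {p q : List ℕ}
    (h : replaceAt t p u = some s) (hq : p <+: q → q = p) :
    q ∈ PosMu μ s ↔ q ∈ PosMu μ t := by
  induction p generalizing t s q with
  | nil =>
    have := hq List.nil_prefix
    subst this
    exact iff_of_true (mem_posMu_nil μ _) (mem_posMu_nil μ _)
  | cons i p ih =>
    cases t with
    | var x => simp [replaceAt] at h
    | app f ts =>
      rw [replaceAt_cons] at h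
      split at h
      case isFalse => simp at h
      case isTrue hlt =>
        rcases Option.map_eq_some_iff.mp h with ⟨v, hv, rfl⟩
        cases q with
        | nil => exact iff_of_true (mem_posMu_nil μ _) (mem_posMu_nil μ _)
        | cons j q' =>
          rw [mem_posMu_cons, mem_posMu_cons]
          by_cases hij : j = i
          · subst hij
            have hq' : p <+: q' → q' = p := by
              intro hp
              have := hq (List.cons_prefix_cons.mpr ⟨rfl, hp⟩)
              exact List.cons.inj this |>.2
            constructor
            · rintro ⟨h', hmu, hr⟩
              exact ⟨h', hmu, (by
                have := Function.update_self (⟨j, hlt⟩ : Fin (ar f)) v ts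
                rw [this] at hr
                exact (ih hv hq').mp hr)⟩
            · rintro ⟨h', hmu, hr⟩
              refine ⟨h', hmu, ?_⟩
              rw [Function.update_self]
              exact (ih hv hq').mpr hr
          · constructor
            · rintro ⟨h', hmu, hr⟩
              refine ⟨h', hmu, ?_⟩
              rwa [Function.update_of_ne (by simp [Fin.ext_iff, hij])] at hr
            · rintro ⟨h', hmu, hr⟩
              refine ⟨h', hmu, ?_⟩
              rwa [Function.update_of_ne (by simp [Fin.ext_iff, hij])]

lemma subtermAt_append (s : Term F ar X) (q r : List ℕ) :
    subtermAt s (q ++ r) = (subtermAt s q).bind (fun w => subtermAt w r) := by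
  induction q generalizing s with
  | nil => rw [subtermAt_nil]; rfl
  | cons i q ih =>
    cases s with
    | var x => simp [subtermAt]
    | app f ts =>
      rw [List.cons_append, subtermAt_cons, subtermAt_cons]
      split
      · exact ih _
      · rfl

lemma replaceAt_append {s t u w : Term F ar X} {q r : List ℕ}
    (h : replaceAt s (q ++ r) u = some t) (hw : subtermAt s q = some w) :
    ∃ w', replaceAt w r u = some w' ∧ subtermAt t q = some w' := by
  induction q generalizing s t with
  | nil =>
    rw [subtermAt_nil] at hw
    cases hw
    exact ⟨t, h, subtermAt_nil t⟩
  | cons i q ih =>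
    cases s with
    | var x => simp [subtermAt] at hw
    | app f ts =>
      rw [subtermAt_cons] at hw
      rw [List.cons_append, replaceAt_cons] at h
      split at h
      case isFalse hlt => rw [dif_neg hlt] at hw; exact absurd hw (by simp)
      case isTrue hlt =>
        rw [dif_pos hlt] at hw
        rcases Option.map_eq_some_iff.mp h with ⟨v, hv, rfl⟩
        obtain ⟨w', hw1, hw2⟩ := ih hv hw
        exact ⟨w', hw1, by rw [subtermAt_cons, dif_pos hlt, Function.update_self]; exact hw2⟩

lemma posMu_append_intro {μ : RepMap F ar} {s w : Term F ar X} {q r : List ℕ}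
    (hq : q ∈ PosMu μ s) (hw : subtermAt s q = some w) (hr : r ∈ PosMu μ w) :
    q ++ r ∈ PosMu μ s := by
  induction q generalizing s with
  | nil =>
    rw [subtermAt_nil] at hw
    cases hw
    exact hr
  | cons i q ih =>
    cases s with
    | var x => simp [subtermAt] at hw
    | app f ts =>
      obtain ⟨hlt, hmu, hq'⟩ := mem_posMu_cons.mp hq
      rw [subtermAt_cons, dif_pos hlt] at hw
      rw [List.cons_append]
      exact mem_posMu_cons.mpr ⟨hlt, hmu, ih hq' hw⟩

lemma posMu_append_elim {μ : RepMap F ar} {s : Term F ar X} {q r : List ℕ}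
    (h : q ++ r ∈ PosMu μ s) :
    q ∈ PosMu μ s ∧ ∃ w, subtermAt s q = some w ∧ r ∈ PosMu μ w := by
  induction q generalizing s with
  | nil => exact ⟨mem_posMu_nil μ s, s, subtermAt_nil s, h⟩
  | cons i q ih =>
    cases s with
    | var x => rw [List.cons_append] at h; simp [PosMu] at h
    | app f ts =>
      rw [List.cons_append, mem_posMu_cons] at h
      obtain ⟨hlt, hmu, h'⟩ := h
      obtain ⟨h1, w, h2, h3⟩ := ih h'
      exact ⟨mem_posMu_cons.mpr ⟨hlt, hmu, h1⟩, w,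
        by rw [subtermAt_cons, dif_pos hlt]; exact h2, h3⟩

end Aux2

section Aux3
variable {F X : Type} {ar : F → ℕ}

lemma posF_or_var {σ : X → Term F ar X} {l : Term F ar X} {p : List ℕ} {w : Term F ar X}
    (h : subtermAt (subst σ l) p = some w) :
    p ∈ PosF l ∨ ∃ x v w', p = v ++ w' ∧ subtermAt l v = some (.var x) := by
  induction l generalizing p w with
  | var x => exact Or.inr ⟨x, [], p, rfl, subtermAt_nil _⟩
  | app f ts ih =>
    cases p with
    | nil => exact Or.inl (mem_posF_nil f ts)
    | cons i p' =>
      rw [subst_app, subtermAt_cons] at h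
      split at h
      case isFalse => simp at h
      case isTrue hlt =>
        rcases ih _ h with hPF | ⟨x, v, w', rfl, hv⟩
        · exact Or.inl (mem_posF_cons.mpr ⟨hlt, hPF⟩)
        · exact Or.inr ⟨x, i :: v, w', rfl, by rw [subtermAt_cons, dif_pos hlt]; exact hv⟩

lemma posMu_subst {μ : RepMap F ar} {σ : X → Term F ar X} {l : Term F ar X} {p : List ℕ}
    (h : p ∈ PosMu μ l) : p ∈ PosMu μ (subst σ l) := by
  induction l generalizing p with
  | var x =>
    have : p = [] := by simpa [PosMu] using h
    subst this
    exact mem_posMu_nil μ _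
  | app f ts ih =>
    cases p with
    | nil => exact mem_posMu_nil μ _
    | cons i p' =>
      obtain ⟨hlt, hmu, hp'⟩ := mem_posMu_cons.mp h
      rw [subst_app]
      exact mem_posMu_cons.mpr ⟨hlt, hmu, ih _ hp'⟩

lemma posMu_mono {μ1 μ2 : RepMap F ar} (h : μ1 ≤ μ2) (t : Term F ar X) :
    ∀ p ∈ PosMu μ1 t, p ∈ PosMu μ2 t := by
  induction t with
  | var x => intro p hp; exact hp
  | app f ts ih =>
    intro p hp
    cases p with
    | nil => exact mem_posMu_nil μ2 _
    | cons i p' =>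
      obtain ⟨hlt, hmu, hp'⟩ := mem_posMu_cons.mp hp
      exact mem_posMu_cons.mpr ⟨hlt, h f hmu, ih _ _ hp'⟩

lemma muTerm_le_app (f : F) (ts : Fin (ar f) → Term F ar X) (i : Fin (ar f)) :
    muTerm (ts i) ≤ muTerm (Term.app f ts) := by
  rw [show muTerm (Term.app f ts) = muEps f ts ⊔ ⨆ i, muTerm (ts i) from rfl]
  exact le_sup_of_le_right (le_iSup (fun j : Fin (ar f) => muTerm (ts j)) i)

lemma mem_muEps {f : F} {ts : Fin (ar f) → Term F ar X} (i : Fin (ar f))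
    (h : ¬ (ts i).IsVar) : i ∈ muEps f ts f :=
  ⟨rfl, h⟩

lemma posF_sub_posMu_muTerm (l : Term F ar X) :
    ∀ p ∈ PosF l, p ∈ PosMu (muTerm l) l := by
  induction l with
  | var x => intro p hp; simp [PosF] at hp
  | app f ts ih =>
    intro p hp
    cases p with
    | nil => exact mem_posMu_nil _ _
    | cons i p' =>
      obtain ⟨hlt, hp'⟩ := mem_posF_cons.mp hp
      have hvar : ¬ (ts ⟨i, hlt⟩).IsVar := by
        cases hts : ts ⟨i, hlt⟩ with
        | var y => rw [hts] at hp'; simp [PosF] at hp'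
        | app g us => simp [Term.IsVar]
      refine mem_posMu_cons.mpr ⟨hlt, ?_, ?_⟩
      · show (⟨i, hlt⟩ : Fin (ar f)) ∈ (muEps f ts ⊔ ⨆ j, muTerm (ts j)) f
        rw [Pi.sup_apply]
        exact Set.mem_union_left _ (mem_muEps _ hvar)
      · exact posMu_mono (muTerm_le_app f ts ⟨i, hlt⟩) _ _ (ih _ _ hp')

lemma muTerm_le_muCan {R : TRS F ar X} {r : Rule F ar X} (hr : r ∈ R) :
    muTerm r.lhs ≤ muCan R :=
  le_iSup₂ (f := fun r (_ : r ∈ R) => muTerm r.lhs) r hr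

lemma posF_sub_posMu_of_canonical {R : TRS F ar X} {μ : RepMap F ar}
    (hcan : Canonical R μ) {r : Rule F ar X} (hr : r ∈ R) :
    ∀ p ∈ PosF r.lhs, p ∈ PosMu μ r.lhs := fun p hp =>
  posMu_mono (le_trans (muTerm_le_muCan hr) hcan) _ _ (posF_sub_posMu_muTerm _ p hp)

lemma mem_varOccs_of_subtermAt_var {l : Term F ar X} {v : List ℕ} {x : X}
    (h : subtermAt l v = some (.var x)) : x ∈ varOccs l := by
  induction l generalizing v with
  | var y =>
    cases v with
    | nil =>
      rw [subtermAt_nil] at h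
      cases h
      simp [varOccs]
    | cons i v' => simp [subtermAt] at h
  | app f ts ih =>
    cases v with
    | nil =>
      rw [subtermAt_nil] at h
      exact absurd h (by simp)
    | cons i v' =>
      rw [subtermAt_cons] at h
      split at h
      case isFalse => simp at h
      case isTrue hlt =>
        have := ih _ h
        simp only [varOccs, Multiset.mem_sum]
        exact ⟨⟨i, hlt⟩, Finset.mem_univ _, this⟩

lemma subst_update_notMem [DecidableEq X] {u' : Term F ar X} {σ : X → Term F ar X}
    {x : X} {a : Term F ar X} (h : x ∉ varOccs u') :
    subst (Function.update σ x a) u' = subst σ u' := by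
  induction u' with
  | var y =>
    have hne : y ≠ x := by
      intro hxy; subst hxy; simp [varOccs] at h
    simp [subst, Function.update_of_ne hne]
  | app f ts ih =>
    rw [subst, subst]
    congr 1
    funext j
    refine ih j ?_
    intro hmem
    exact h (by simp only [varOccs, Multiset.mem_sum]; exact ⟨j, Finset.mem_univ _, hmem⟩)

lemma linear_replace [DecidableEq X] {l : Term F ar X} {σ : X → Term F ar X}
    {x : X} {v w : List ℕ} {u t' : Term F ar X}
    (hlin : (varOccs l).count x ≤ 1)
    (hv : subtermAt l v = some (.var x))
    (hrep : replaceAt (subst σ l) (v ++ w) u = some t') :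
    ∃ a, t' = subst (Function.update σ x a) l := by
  induction l generalizing v σ t' with
  | var y =>
    have hv' : v = [] := by
      cases v with
      | nil => rfl
      | cons i v'' => simp [subtermAt] at hv
    subst hv'
    rw [subtermAt_nil] at hv
    have : y = x := Term.var.inj (Option.some.inj hv)
    subst this
    exact ⟨t', by simp [subst, Function.update_self]⟩
  | app f ts ih =>
    cases v with
    | nil =>
      rw [subtermAt_nil] at hv
      exact absurd hv (by simp)
    | cons i v' =>
      rw [subtermAt_cons] at hv
      split at hv
      case isFalse => exact absurd hv (by simp)
      case isTrue hlt =>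
        rw [List.cons_append, subst_app, replaceAt_cons, dif_pos hlt] at hrep
        rcases Option.map_eq_some_iff.mp hrep with ⟨w', hw', rfl⟩
        have hsum : ∑ k : Fin (ar f), ((varOccs (ts k)).count x) ≤ 1 := by
          rw [← Multiset.count_sum' (s := Finset.univ) (a := x)
            (f := fun k => varOccs (ts k))]
          exact hlin
        have hxi : x ∈ varOccs (ts ⟨i, hlt⟩) := mem_varOccs_of_subtermAt_var hv
        have hcnti : 1 ≤ (varOccs (ts ⟨i, hlt⟩)).count x := Multiset.one_le_count_iff_mem.mpr hxi
        have hlini : (varOccs (ts ⟨i, hlt⟩)).count x ≤ 1 :=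
          le_trans (Finset.single_le_sum (f := fun k => (varOccs (ts k)).count x)
            (fun _ _ => Nat.zero_le _) (Finset.mem_univ _)) hsum
        obtain ⟨a, rfl⟩ := ih ⟨i, hlt⟩ hlini hv hw'
        refine ⟨a, ?_⟩
        rw [subst_app]
        congr 1
        funext j
        by_cases hj : j = ⟨i, hlt⟩
        · subst hj; rw [Function.update_self]
        · rw [Function.update_of_ne hj]
          refine (subst_update_notMem ?_).symm
          intro hmem
          have hcntj : 1 ≤ (varOccs (ts j)).count x := Multiset.one_le_count_iff_mem.mpr hmem
          have : (varOccs (ts ⟨i, hlt⟩)).count x + (varOccs (ts j)).count x ≤ 1 := by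
            calc (varOccs (ts ⟨i, hlt⟩)).count x + (varOccs (ts j)).count x
                = ∑ k ∈ ({⟨i, hlt⟩, j} : Finset (Fin (ar f))), (varOccs (ts k)).count x := by
                  rw [Finset.sum_pair (Ne.symm hj)]
              _ ≤ ∑ k : Fin (ar f), (varOccs (ts k)).count x :=
                  Finset.sum_le_sum_of_subset (Finset.subset_univ _)
              _ ≤ 1 := hsum
          omega
end Aux3

section Aux4
variable {F X : Type} {ar : F → ℕ}

lemma csstep_of_redex {R : TRS F ar X} {μ : RepMap F ar} {t : Term F ar X} {q : List ℕ}
    {r : Rule F ar X} {σ : X → Term F ar X} (hr : r ∈ R) (hq : q ∈ PosMu μ t)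
    (hsub : subtermAt t q = some (subst σ r.lhs)) : ∃ u, CSRew R μ t u := by
  obtain ⟨s, hs⟩ := replaceAt_isSome hsub (subst σ r.rhs)
  exact ⟨s, q, hq, r, hr, σ, hsub, hs⟩

lemma muNF_step [DecidableEq X] {R : TRS F ar X} {μ : RepMap F ar}
    (hll : LeftLinear R) (hcan : Canonical R μ) {t s : Term F ar X}
    (hnf : MuNormalForm R μ t) (hstep : Rew R t s) : MuNormalForm R μ s := by
  obtain ⟨p, r0, hr0, σ0, hsub0, hrep0⟩ := hstep
  rintro ⟨s', q, hqmem, r1, hr1, σ1, hsub1, _⟩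
  by_cases hpq : p <+: q
  · obtain ⟨r', rfl⟩ := hpq
    have hpPos : p ∈ PosMu μ s := (posMu_append_elim hqmem).1
    have hpt : p ∈ PosMu μ t := (posMu_replaceAt hrep0 (fun _ => rfl)).mp hpPos
    exact hnf (csstep_of_redex hr0 hpt hsub0)
  · by_cases hqp : q <+: p
    · obtain ⟨p', rfl⟩ := hqp
      have hsp : subtermAt s (q ++ p') = some (subst σ0 r0.rhs) :=
        subtermAt_replaceAt_self hrep0
      have hsub' : subtermAt (subst σ1 r1.lhs) p' = some (subst σ0 r0.rhs) := by
        rw [subtermAt_append, hsub1] at hsp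
        exact hsp
      rcases posF_or_var hsub' with hPF | ⟨x, v, w, rfl, hv⟩
      · have h1 : p' ∈ PosMu μ r1.lhs := posF_sub_posMu_of_canonical hcan hr1 p' hPF
        have h3 : q ++ p' ∈ PosMu μ s := posMu_append_intro hqmem hsub1 (posMu_subst h1)
        have h4 : q ++ p' ∈ PosMu μ t := (posMu_replaceAt hrep0 (fun _ => rfl)).mp h3
        exact hnf (csstep_of_redex hr0 h4 hsub0)
      · have hvne : v ≠ [] := by
          rintro rfl
          rw [subtermAt_nil] at hv
          have h := Option.some.inj hv
          exact r1.lhs_not_var (by rw [h]; trivial)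
        have hback : replaceAt s (q ++ (v ++ w)) (subst σ0 r0.lhs) = some t :=
          replaceAt_back hrep0 hsub0
        obtain ⟨w', hw', htq⟩ := replaceAt_append hback hsub1
        obtain ⟨a, rfl⟩ := linear_replace (hll r1 hr1 x) hv hw'
        have hqt : q ∈ PosMu μ t := by
          refine (posMu_replaceAt hrep0 ?_).mp hqmem
          intro hpref
          exfalso
          have hlen := hpref.length_le
          simp at hlen
          rcases hlen with ⟨h1, h2⟩
          exact hvne h1
        exact hnf (csstep_of_redex hr1 hqt htq)
    · have hsubt : subtermAt t q = some (subst σ1 r1.lhs) := by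
        rw [← subtermAt_replaceAt_off hrep0 hpq hqp]
        exact hsub1
      have hqt : q ∈ PosMu μ t :=
        (posMu_replaceAt hrep0 (fun h => absurd h hpq)).mp hqmem
      exact hnf (csstep_of_redex hr1 hqt hsubt)

end Aux4

end CSR

/-- For a left-linear TRS and a canonical replacement map, every μ-normal
form is a head-normal form. -/
theorem stmt_6 {F X : Type} {ar : F → ℕ} [DecidableEq X] (R : CSR.TRS F ar X)
    (μ : CSR.RepMap F ar) (hll : CSR.LeftLinear R) (hcan : CSR.Canonical R μ)
    (t : CSR.Term F ar X) (hnf : CSR.MuNormalForm R μ t) :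
    CSR.HeadNormalForm R t := by
  have key : ∀ u, Relation.ReflTransGen (CSR.Rew R) t u → CSR.MuNormalForm R μ u := by
    intro u hu
    induction hu with
    | refl => exact hnf
    | tail _ hstep ih => exact CSR.muNF_step hll hcan ih hstep
  intro u hu hred
  obtain ⟨r, hr, σ, rfl⟩ := hred
  exact key _ hu ⟨CSR.subst σ r.rhs, [], CSR.mem_posMu_nil μ _, r, hr, σ,
    CSR.subtermAt_nil _, CSR.replaceAt_nil _ _⟩
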